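/- The 3-uniform hypergraph 35-35d (35 vertices, 35 edges, listed in the context) admits exactly one state, namely the constant function assigning 1/3 to every vertex. -/
import Mathlib
set_option maxHeartbeats 1000000


/-- A state on a 3-uniform hypergraph with vertex set `Fin n` and edge list `E`:
a function `m` with `0 ≤ m v ≤ 1` for every vertex and whose values sum to `1`
over every edge. -/
def IsHypergraphState {n : ℕ} (E : List (Fin n × Fin n × Fin n)) (m : Fin n → ℝ) : Prop :=
  (∀ v, 0 ≤ m v ∧ m v ≤ 1) ∧ ∀ e ∈ E, m e.1 + m e.2.1 + m e.2.2 = 1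

def edges3535d : List (Fin 35 × Fin 35 × Fin 35) :=
  [(32, 33, 34), (34, 14, 16), (16, 17, 21), (21, 20, 22), (22, 18, 19),
   (19, 7, 28), (28, 31, 25), (25, 9, 13), (13, 15, 11), (11, 3, 29),
   (29, 8, 1), (1, 27, 6), (6, 24, 0), (0, 30, 10), (10, 26, 2),
   (2, 5, 32), (29, 30, 31), (26, 27, 28), (23, 24, 25), (14, 15, 19),
   (12, 13, 17), (9, 10, 22), (7, 8, 17), (5, 6, 15), (4, 20, 27),
   (3, 18, 24), (3, 16, 26), (4, 14, 23), (4, 12, 30), (2, 8, 23),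
   (5, 21, 31), (11, 20, 33), (12, 18, 32), (1, 9, 34), (0, 7, 33)]

/-- The hypergraph 35-35d admits exactly one state, namely the constant
function assigning `1/3` to every vertex. -/
theorem edges3535d_unique_state :
    ∀ m : Fin 35 → ℝ, IsHypergraphState edges3535d m ↔ ∀ v, m v = 1/3 := by
  intro m
  constructor
  · intro h
    have e0 : m 32 + m 33 + m 34 = 1 := h.2 (32,33,34) (by simp [edges3535d])
    have e1 : m 34 + m 14 + m 16 = 1 := h.2 (34,14,16) (by simp [edges3535d])
    have e2 : m 16 + m 17 + m 21 = 1 := h.2 (16,17,21) (by simp [edges3535d])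
    have e3 : m 21 + m 20 + m 22 = 1 := h.2 (21,20,22) (by simp [edges3535d])
    have e4 : m 22 + m 18 + m 19 = 1 := h.2 (22,18,19) (by simp [edges3535d])
    have e5 : m 19 + m 7 + m 28 = 1 := h.2 (19,7,28) (by simp [edges3535d])
    have e6 : m 28 + m 31 + m 25 = 1 := h.2 (28,31,25) (by simp [edges3535d])
    have e7 : m 25 + m 9 + m 13 = 1 := h.2 (25,9,13) (by simp [edges3535d])
    have e8 : m 13 + m 15 + m 11 = 1 := h.2 (13,15,11) (by simp [edges3535d])
    have e9 : m 11 + m 3 + m 29 = 1 := h.2 (11,3,29) (by simp [edges3535d])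
    have e10 : m 29 + m 8 + m 1 = 1 := h.2 (29,8,1) (by simp [edges3535d])
    have e11 : m 1 + m 27 + m 6 = 1 := h.2 (1,27,6) (by simp [edges3535d])
    have e12 : m 6 + m 24 + m 0 = 1 := h.2 (6,24,0) (by simp [edges3535d])
    have e13 : m 0 + m 30 + m 10 = 1 := h.2 (0,30,10) (by simp [edges3535d])
    have e14 : m 10 + m 26 + m 2 = 1 := h.2 (10,26,2) (by simp [edges3535d])
    have e15 : m 2 + m 5 + m 32 = 1 := h.2 (2,5,32) (by simp [edges3535d])
    have e16 : m 29 + m 30 + m 31 = 1 := h.2 (29,30,31) (by simp [edges3535d])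
    have e17 : m 26 + m 27 + m 28 = 1 := h.2 (26,27,28) (by simp [edges3535d])
    have e18 : m 23 + m 24 + m 25 = 1 := h.2 (23,24,25) (by simp [edges3535d])
    have e19 : m 14 + m 15 + m 19 = 1 := h.2 (14,15,19) (by simp [edges3535d])
    have e20 : m 12 + m 13 + m 17 = 1 := h.2 (12,13,17) (by simp [edges3535d])
    have e21 : m 9 + m 10 + m 22 = 1 := h.2 (9,10,22) (by simp [edges3535d])
    have e22 : m 7 + m 8 + m 17 = 1 := h.2 (7,8,17) (by simp [edges3535d])
    have e23 : m 5 + m 6 + m 15 = 1 := h.2 (5,6,15) (by simp [edges3535d])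
    have e24 : m 4 + m 20 + m 27 = 1 := h.2 (4,20,27) (by simp [edges3535d])
    have e25 : m 3 + m 18 + m 24 = 1 := h.2 (3,18,24) (by simp [edges3535d])
    have e26 : m 3 + m 16 + m 26 = 1 := h.2 (3,16,26) (by simp [edges3535d])
    have e27 : m 4 + m 14 + m 23 = 1 := h.2 (4,14,23) (by simp [edges3535d])
    have e28 : m 4 + m 12 + m 30 = 1 := h.2 (4,12,30) (by simp [edges3535d])
    have e29 : m 2 + m 8 + m 23 = 1 := h.2 (2,8,23) (by simp [edges3535d])
    have e30 : m 5 + m 21 + m 31 = 1 := h.2 (5,21,31) (by simp [edges3535d])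
    have e31 : m 11 + m 20 + m 33 = 1 := h.2 (11,20,33) (by simp [edges3535d])
    have e32 : m 12 + m 18 + m 32 = 1 := h.2 (12,18,32) (by simp [edges3535d])
    have e33 : m 1 + m 9 + m 34 = 1 := h.2 (1,9,34) (by simp [edges3535d])
    have e34 : m 0 + m 7 + m 33 = 1 := h.2 (0,7,33) (by simp [edges3535d])
    have h0 : m 0 = 1/3 := by linarith
    have h1 : m 1 = 1/3 := by linarith
    have h2 : m 2 = 1/3 := by linarith
    have h3 : m 3 = 1/3 := by linarith
    have h4 : m 4 = 1/3 := by linarith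
    have h5 : m 5 = 1/3 := by linarith
    have h6 : m 6 = 1/3 := by linarith
    have h7 : m 7 = 1/3 := by linarith
    have h8 : m 8 = 1/3 := by linarith
    have h9 : m 9 = 1/3 := by linarith
    have h10 : m 10 = 1/3 := by linarith
    have h11 : m 11 = 1/3 := by linarith
    have h12 : m 12 = 1/3 := by linarith
    have h13 : m 13 = 1/3 := by linarith
    have h14 : m 14 = 1/3 := by linarith
    have h15 : m 15 = 1/3 := by linarith
    have h16 : m 16 = 1/3 := by linarith
    have h17 : m 17 = 1/3 := by linarith
    have h18 : m 18 = 1/3 := by linarith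
    have h19 : m 19 = 1/3 := by linarith
    have h20 : m 20 = 1/3 := by linarith
    have h21 : m 21 = 1/3 := by linarith
    have h22 : m 22 = 1/3 := by linarith
    have h23 : m 23 = 1/3 := by linarith
    have h24 : m 24 = 1/3 := by linarith
    have h25 : m 25 = 1/3 := by linarith
    have h26 : m 26 = 1/3 := by linarith
    have h27 : m 27 = 1/3 := by linarith
    have h28 : m 28 = 1/3 := by linarith
    have h29 : m 29 = 1/3 := by linarith
    have h30 : m 30 = 1/3 := by linarith
    have h31 : m 31 = 1/3 := by linarith
    have h32 : m 32 = 1/3 := by linarith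
    have h33 : m 33 = 1/3 := by linarith
    have h34 : m 34 = 1/3 := by linarith
    intro v
    fin_cases v
    exacts [h0, h1, h2, h3, h4, h5, h6, h7, h8, h9, h10, h11, h12, h13, h14, h15, h16, h17, h18, h19, h20, h21, h22, h23, h24, h25, h26, h27, h28, h29, h30, h31, h32, h33, h34]
  · intro h
    refine ⟨fun v => by rw [h v]; norm_num, fun e _ => ?_⟩
    rw [h e.1, h e.2.1, h e.2.2]; norm_num
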